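/- For all integers N ≥ 0 and 0 ≤ i ≤ N, the sum of squares along row i of the symmetric Krawtchouk matrix satisfies ∑_{j=0}^N (Φ^N_{i,j})² = ∑_{k=0}^i C(N+1, 2k+1) · C(2k, k) · C(N−2k, i−k). -/
import Mathlib

open Polynomial Finset in
private noncomputable abbrev RR := Polynomial (Polynomial ℤ)
open Polynomial Finset in
private noncomputable abbrev xx : RR := Polynomial.C Polynomial.X

section Aux
open Polynomial Finset

set_option maxRecDepth 4000 in
theorem coeff_one_sub_X_pow (j k : ℕ) :
    ((1 - X : ℤ[X]) ^ j).coeff k = (-1:ℤ)^k * j.choose k := by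
  have h2 : (1 - X : ℤ[X]) ^ j = ∑ t ∈ range (j+1), (-X)^t * 1^(j-t) * (j.choose t : ℤ[X]) := by
    rw [← add_pow]; ring_nf
  rw [h2, finset_sum_coeff]
  have h : ∀ t ∈ range (j+1), ((-X : ℤ[X])^t * 1^(j-t) * (j.choose t : ℤ[X])).coeff k
      = if t = k then (-1:ℤ)^k * (j.choose k : ℤ) else 0 := by
    intro t ht
    have e : ((-X : ℤ[X])^t * 1^(j-t) * (j.choose t : ℤ[X]))
        = C ((-1:ℤ)^t * (j.choose t : ℤ)) * X^t := by
      simp only [map_mul, map_pow, map_neg, C_1, C_eq_natCast]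
      ring
    rw [e, coeff_C_mul, coeff_X_pow]
    by_cases htk : t = k
    · subst htk; simp
    · rw [if_neg (Ne.symm htk), if_neg htk, mul_zero]
  rw [Finset.sum_congr rfl h, Finset.sum_ite_eq' (range (j+1)) k]
  split
  · rfl
  · simp only [mem_range, not_lt] at *
    have : j.choose k = 0 := Nat.choose_eq_zero_of_lt (by omega)
    simp [this]


theorem symK_eq_coeff (N i j : ℕ) :
    (∑ k ∈ Finset.range (j + 1),
      if k ≤ i then (-1 : ℤ) ^ k * (j.choose k) * ((N - j).choose (i - k)) else 0)
    = (((1 - X)^j * (1 + X)^(N-j) : ℤ[X])).coeff i := by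
  rw [Polynomial.coeff_mul, Finset.Nat.sum_antidiagonal_eq_sum_range_succ_mk]
  simp only [coeff_one_sub_X_pow, coeff_one_add_X_pow]
  rw [show (∑ k ∈ range (i+1), ((-1:ℤ)^k * (j.choose k) : ℤ) * ((N-j).choose (i-k) : ℤ))
      = ∑ k ∈ range (i+1), (if k ≤ i then (-1 : ℤ) ^ k * (j.choose k) * ((N - j).choose (i - k)) else 0) from
    Finset.sum_congr rfl fun k hk => by rw [if_pos (by simpa [Nat.lt_succ_iff] using hk)]]
  have A := Finset.sum_subset
    (Finset.range_subset_range.2 (by omega : j+1 ≤ j+1+(i+1)))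
    (f := fun k => if k ≤ i then (-1 : ℤ) ^ k * (j.choose k) * ((N - j).choose (i - k)) else 0)
    (fun k hk hk' => by
      simp only [mem_range, not_lt] at hk'
      split
      · rw [Nat.choose_eq_zero_of_lt (by omega)]; push_cast; ring
      · rfl)
  have B := Finset.sum_subset
    (Finset.range_subset_range.2 (by omega : i+1 ≤ j+1+(i+1)))
    (f := fun k => if k ≤ i then (-1 : ℤ) ^ k * (j.choose k) * ((N - j).choose (i - k)) else 0)
    (fun k hk hk' => by
      simp only [mem_range, not_lt] at hk'
      rw [if_neg (by omega)])
  rw [A, B]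


theorem sum_range_double {M : Type*} [AddCommMonoid M] (f : ℕ → M) (n : ℕ) :
    ∑ t ∈ range (2*n), f t = ∑ k ∈ range n, (f (2*k) + f (2*k+1)) := by
  induction n with
  | zero => simp
  | succ n ih =>
    rw [Finset.sum_range_succ, ← ih, show 2*(n+1) = (2*n+1)+1 by ring,
      Finset.sum_range_succ, Finset.sum_range_succ, add_assoc]

theorem odd_part {R : Type*} [CommRing R] (c s : R) (m : ℕ) :
    (c+s)^m - (c-s)^m
      = 2 * ∑ k ∈ range (m+1), (m.choose (2*k+1)) • (c^(m-(2*k+1)) * s^(2*k+1)) := by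
  have h1 : (c+s)^m = ∑ t ∈ range (m+1), s^t * c^(m-t) * (m.choose t) := by
    rw [add_comm c s, add_pow]
  have h2 : (c-s)^m = ∑ t ∈ range (m+1), (-1:R)^t * (s^t * c^(m-t) * (m.choose t)) := by
    rw [show c - s = -s + c by ring, add_pow]
    exact Finset.sum_congr rfl fun t ht => by rw [neg_pow]; ring
  rw [h1, h2, ← Finset.sum_sub_distrib]
  have h3 : ∀ t, s^t * c^(m-t) * (m.choose t) - (-1:R)^t * (s^t * c^(m-t) * (m.choose t))
      = (1 - (-1:R)^t) * (s^t * c^(m-t) * (m.choose t)) := fun t => by ring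
  simp only [h3]
  -- extend range (m+1) to range (2*(m+1))
  rw [Finset.sum_subset (Finset.range_subset_range.2 (by omega : m+1 ≤ 2*(m+1)))
    (fun t ht ht' => by
      simp only [mem_range, not_lt] at ht'
      rw [Nat.choose_eq_zero_of_lt (by omega)]
      push_cast; ring)]
  rw [sum_range_double (fun t => (1 - (-1:R)^t) * (s^t * c^(m-t) * (m.choose t))) (m+1)]
  rw [Finset.mul_sum]
  refine Finset.sum_congr rfl fun k hk => ?_
  have he : (1 - (-1:R)^(2*k)) = 0 := by rw [pow_mul]; simp
  have ho : (1 - (-1:R)^(2*k+1)) = 2 := by rw [pow_succ, pow_mul]; simp; ring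
  rw [he, ho, zero_mul, zero_add, nsmul_eq_mul]
  ring


theorem coeff_ii (n k i : ℕ) :
    ((((1 + xx * X : RR)^n * (xx + X)^(2*k)).coeff i).coeff i : ℤ)
      = if k ≤ i then (n.choose (i-k) : ℤ) * ((2*k).choose k : ℤ) else 0 := by
  have e1 : (1 + xx * X : RR)^n
      = ∑ m ∈ range (n+1), (xx * X)^m * 1^(n-m) * ((n.choose m : ℕ) : RR) := by
    rw [← add_pow]; ring_nf
  have e2 : (xx + X : RR)^(2*k)
      = ∑ t ∈ range (2*k+1), xx^t * X^(2*k-t) * (((2*k).choose t : ℕ) : RR) := by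
    rw [← add_pow]
  rw [e1, e2, Finset.sum_mul_sum]
  simp only [finset_sum_coeff]
  have key : ∀ m ∈ range (n+1), ∀ t ∈ range (2*k+1),
      ((((xx * X)^m * 1^(n-m) * ((n.choose m : ℕ) : RR)) *
          (xx^t * X^(2*k-t) * (((2*k).choose t : ℕ) : RR))).coeff i).coeff i
        = if (m = i - k ∧ t = k ∧ k ≤ i)
            then (n.choose (i-k) : ℤ) * ((2*k).choose k : ℤ) else 0 := by
    intro m hm t ht
    have hterm : ((xx * X : RR)^m * 1^(n-m) * ((n.choose m : ℕ) : RR)) *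
          (xx^t * X^(2*k-t) * (((2*k).choose t : ℕ) : RR))
        = Polynomial.C ((n.choose m : ℤ[X]) * ((2*k).choose t : ℤ[X]) * X^(m+t))
            * X^(m+(2*k-t)) := by
      simp only [map_mul, map_natCast, map_pow]
      ring
    rw [hterm, coeff_C_mul, coeff_X_pow]
    have ht2 : t ≤ 2*k := by simpa [Nat.lt_succ_iff] using ht
    by_cases h1 : i = m + (2*k-t)
    · rw [if_pos h1, mul_one]
      have e3 : ((n.choose m : ℤ[X]) * ((2*k).choose t : ℤ[X]) * X^(m+t))
          = Polynomial.C ((n.choose m : ℤ) * ((2*k).choose t : ℤ)) * X^(m+t) := by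
        simp only [map_mul, map_natCast]
      rw [e3, coeff_C_mul, coeff_X_pow]
      by_cases h2 : i = m + t
      · rw [if_pos h2, mul_one]
        have hmt : m = i - k ∧ t = k ∧ k ≤ i := by omega
        rw [if_pos hmt, hmt.1, hmt.2.1]
      · rw [if_neg h2, mul_zero, if_neg (by omega)]
    · rw [if_neg h1, mul_zero, coeff_zero, if_neg (by omega)]
  rw [Finset.sum_congr rfl (fun m hm => Finset.sum_congr rfl (fun t ht => key m hm t ht))]
  by_cases hk : k ≤ i
  · simp only [hk, and_true]
    have inner : ∀ m, (∑ t ∈ range (2*k+1),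
        if (m = i - k ∧ t = k) then (n.choose (i-k) : ℤ) * ((2*k).choose k : ℤ) else 0)
        = if m = i - k then (n.choose (i-k) : ℤ) * ((2*k).choose k : ℤ) else 0 := by
      intro m
      by_cases hm : m = i - k
      · simp only [hm, true_and]
        rw [Finset.sum_ite_eq' (range (2*k+1)) k, if_pos (mem_range.2 (by omega))]
        simp
      · simp [hm]
    rw [Finset.sum_congr rfl (fun m _ => inner m), Finset.sum_ite_eq' (range (n+1)) (i-k)]
    split
    · rfl
    · rename_i hnot
      simp only [mem_range, not_lt, Nat.lt_succ_iff] at hnot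
      rw [Nat.choose_eq_zero_of_lt (by omega)]
      simp
  · simp [hk]

end Aux

section Main
open Polynomial Finset

/-- Symmetric Krawtchouk values:
`Φ^N_{n,j} = ∑_k (-1)^k C(j,k) C(N-j, n-k)`, the coefficient of `z^n` in
`(1+z)^(N-j) (1-z)^j`. -/
def symKrawtchouk (N n j : ℕ) : ℤ :=
  ∑ k ∈ Finset.range (j + 1),
    if k ≤ n then (-1 : ℤ) ^ k * (j.choose k) * ((N - j).choose (n - k)) else 0

/-- Sum of squares along row `i`:
`∑_{j=0}^N (Φ^N_{i,j})² = ∑_{k=0}^i C(N+1,2k+1)·C(2k,k)·C(N−2k,i−k)`. -/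
theorem symKrawtchouk_row_sq_sum (N i : ℕ) (hi : i ≤ N) :
    ∑ j ∈ Finset.range (N + 1), (symKrawtchouk N i j) ^ 2 =
      ∑ k ∈ Finset.range (i + 1),
        ((N + 1).choose (2 * k + 1) : ℤ) * ((2 * k).choose k : ℤ)
          * ((N - 2 * k).choose (i - k) : ℤ) := by
  set ι : ℤ →+* ℤ[X] := Int.castRingHom ℤ[X]
  set P : ℕ → ℤ[X] := fun j => (1 - X)^j * (1 + X)^(N-j) with hP
  set A : RR := (1 - xx) * (1 - X) with hA
  set B : RR := (1 + xx) * (1 + X) with hB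
  set c : RR := 1 + xx * X with hc
  set s : RR := xx + X with hs
  set S : RR := ∑ j ∈ range (N+1), Polynomial.C (P j) * (P j).map ι with hS
  set S₂ : RR := ∑ k ∈ range (N+2), ((N+1).choose (2*k+1)) • (c^(N-2*k) * s^(2*k)) with hS₂
  -- Step 1: S as a geometric-type sum
  have hterm : ∀ j, Polynomial.C (P j) * (P j).map ι = A^j * B^(N-j) := by
    intro j
    have h1 : Polynomial.C (P j) = (1 - xx)^j * (1 + xx)^(N-j) := by
      simp [hP, map_mul, map_pow, map_sub, map_add, map_one]
    have h2 : (P j).map ι = (1 - X)^j * (1 + X)^(N-j) := by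
      simp [hP, Polynomial.map_mul, Polynomial.map_pow, Polynomial.map_sub,
        Polynomial.map_add, Polynomial.map_one, Polynomial.map_X]
    rw [h1, h2, hA, hB, mul_pow, mul_pow]; ring
  -- Step 2: S * (B - A) = B^(N+1) - A^(N+1)
  have hgeom : S * (B - A) = B^(N+1) - A^(N+1) := by
    have h := geom_sum₂_mul A B (N+1)
    simp only [Nat.add_sub_cancel] at h
    have hSg : S = ∑ j ∈ range (N+1), A^j * B^(N-j) :=
      Finset.sum_congr rfl fun j _ => hterm j
    rw [hSg]
    linear_combination -h
  -- Step 3: odd part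
  have hBcs : B = c + s := by rw [hB, hc, hs]; ring
  have hAcs : A = c - s := by rw [hA, hc, hs]; ring
  have hodd : B^(N+1) - A^(N+1) = (2*s) * S₂ := by
    rw [hBcs, hAcs, odd_part c s (N+1), hS₂, Finset.mul_sum, Finset.mul_sum]
    refine Finset.sum_congr rfl fun k hk => ?_
    have he : N+1-(2*k+1) = N - 2*k := by omega
    rw [he, nsmul_eq_mul, nsmul_eq_mul]
    ring
  -- Step 4: cancel 2*s
  have hsne : (2*s : RR) ≠ 0 := by
    refine mul_ne_zero two_ne_zero fun h => ?_
    have := congrArg (fun p : RR => Polynomial.coeff p 1) h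
    simp [hs] at this
  have hBA : B - A = 2*s := by rw [hBcs, hAcs]; ring
  have hSS : S = S₂ := by
    apply mul_right_cancel₀ hsne
    calc S * (2*s) = B^(N+1) - A^(N+1) := by rw [← hBA, hgeom]
      _ = (2*s) * S₂ := hodd
      _ = S₂ * (2*s) := mul_comm _ _
  -- Step 5: extract the (i,i) coefficient
  have hco := congrArg (fun p : RR => (p.coeff i).coeff i) hSS
  rw [hS, hS₂] at hco
  simp only [finset_sum_coeff] at hco
  have hL : ∀ j, ((Polynomial.C (P j) * (P j).map ι).coeff i).coeff i
      = ((P j).coeff i)^2 := by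
    intro j
    rw [coeff_C_mul, coeff_map, eq_intCast ι, mul_comm, coeff_intCast_mul, Int.cast_id, sq]
  have hR : ∀ k : ℕ, ((((N+1).choose (2*k+1)) • (c^(N-2*k) * s^(2*k)) : RR).coeff i).coeff i
      = ((N+1).choose (2*k+1)) •
        (if k ≤ i then ((N-2*k).choose (i-k) : ℤ) * ((2*k).choose k : ℤ) else 0) := by
    intro k
    rw [coeff_smul, coeff_smul, hc, hs, coeff_ii (N-2*k) k i]
  rw [Finset.sum_congr rfl (fun j _ => hL j), Finset.sum_congr rfl (fun k _ => hR k)] at hco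
  have hsym : ∀ j, symKrawtchouk N i j = (P j).coeff i := fun j => symK_eq_coeff N i j
  rw [Finset.sum_congr rfl (fun j _ => congrArg (· ^ 2) (hsym j))]
  rw [hco]
  rw [← Finset.sum_subset (Finset.range_subset_range.2 (by omega : i+1 ≤ N+2))
    (fun k hk hk' => by
      have : ¬ k ≤ i := by simp only [mem_range, not_lt] at hk'; omega
      rw [if_neg this, smul_zero])]
  refine Finset.sum_congr rfl fun k hk => ?_
  have hki : k ≤ i := by simpa [Nat.lt_succ_iff] using hk
  rw [if_pos hki, nsmul_eq_mul]
  ring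

end Main
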